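/- arXiv:2406.15417 — 3 statements merged into one kernel-verified Lean document; each statement's English description precedes it below -/
import Mathlib

section
/- Let X be a complex Banach space, 2 < α < 3 real, b : ℕ → ℂ a scalar sequence and P : ℕ → X a vector-valued sequence. Then for every n ∈ ℕ, Δ^α(b*P)(n) = (b*Δ^α P)(n) + b(n+3)P(0) + b(n+2)[P(1) − αP(0)] + b(n+1)[P(2) − αP(1) + (α(α−1)/2)P(0)]. -/
/-- The kernel `k^β(j) = Γ(β+j)/(Γ(β)Γ(j+1))`. -/
noncomputable def kker (β : ℝ) (j : ℕ) : ℝ :=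
  Real.Gamma (β + j) / (Real.Gamma β * Real.Gamma (j + 1))

/-- Finite convolution of a scalar sequence with a vector-valued sequence:
`(a*g)(n) = Σ_{j=0}^n a(n−j) • g(j)`. -/
noncomputable def conv {R M : Type*} [Semiring R] [AddCommMonoid M] [Module R M]
    (a : ℕ → R) (g : ℕ → M) (n : ℕ) : M :=
  ∑ j ∈ Finset.range (n + 1), a (n - j) • g j

/-- Forward difference `Δu(n) = u(n+1) − u(n)`. -/
def fdiff {M : Type*} [AddCommGroup M] (u : ℕ → M) (n : ℕ) : M := u (n + 1) - u n

/-- Riemann–Liouville fractional difference of order `α` (for `2 < α < 3`):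
`Δ^α u(n) = Δ³ (k^{3−α} * u)(n)`. -/
noncomputable def fracDiff {M : Type*} [AddCommGroup M] [Module ℝ M]
    (α : ℝ) (u : ℕ → M) (n : ℕ) : M :=
  fdiff (fdiff (fdiff (conv (kker (3 - α)) u))) n

/-- Swapping a triangular double sum. -/
lemma tri_swap {M : Type*} [AddCommMonoid M] (n : ℕ) (F : ℕ → ℕ → M) :
    ∑ j ∈ Finset.range (n + 1), ∑ i ∈ Finset.range (j + 1), F j i
      = ∑ i ∈ Finset.range (n + 1), ∑ j ∈ Finset.Ico i (n + 1), F j i := by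
  refine Finset.sum_comm' ?_
  intro j i
  simp only [Finset.mem_range, Finset.mem_Ico]
  omega

/-- Convolutions with scalars from two different (commuting) actions commute. -/
lemma conv_swap {X : Type*} [AddCommMonoid X] [Module ℝ X] [Module ℂ X]
    [SMulCommClass ℝ ℂ X] (a : ℕ → ℝ) (b : ℕ → ℂ) (P : ℕ → X) (n : ℕ) :
    conv a (conv b P) n = conv b (conv a P) n := by
  have key : ∀ (c : ℕ → ℝ) (d : ℕ → ℂ),
      (∑ j ∈ Finset.range (n + 1), ∑ i ∈ Finset.range (j + 1),
        d (j - i) • (c (n - j) • P i))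
      = ∑ i ∈ Finset.range (n + 1), ∑ m ∈ Finset.range (n + 1 - i),
          d m • (c (n - i - m) • P i) := by
    intro c d
    rw [tri_swap]
    refine Finset.sum_congr rfl fun i hi => ?_
    rw [Finset.sum_Ico_eq_sum_range]
    refine Finset.sum_congr rfl fun m hm => ?_
    simp only [Finset.mem_range] at hi hm
    rw [show i + m - i = m by omega, show n - (i + m) = n - i - m by omega]
  calc conv a (conv b P) n
      = ∑ j ∈ Finset.range (n + 1), ∑ i ∈ Finset.range (j + 1),
          b (j - i) • (a (n - j) • P i) := by
        simp only [conv, Finset.smul_sum]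
        exact Finset.sum_congr rfl fun j _ => Finset.sum_congr rfl fun i _ =>
          (smul_comm _ _ _)
    _ = ∑ i ∈ Finset.range (n + 1), ∑ m ∈ Finset.range (n + 1 - i),
          b m • (a (n - i - m) • P i) := key a b
    _ = ∑ i ∈ Finset.range (n + 1), ∑ m ∈ Finset.range (n + 1 - i),
          b (n - i - m) • (a m • P i) := by
        refine Finset.sum_congr rfl fun i hi => ?_
        rw [← Finset.sum_range_reflect]
        refine Finset.sum_congr rfl fun m hm => ?_
        simp only [Finset.mem_range] at hi hm
        rw [show n + 1 - i - 1 - m = n - i - m by omega,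
          show n - i - (n - i - m) = m by omega]
    _ = ∑ j ∈ Finset.range (n + 1), ∑ i ∈ Finset.range (j + 1),
          b (n - j) • (a (j - i) • P i) := by
        rw [tri_swap]
        refine Finset.sum_congr rfl fun i hi => ?_
        rw [Finset.sum_Ico_eq_sum_range]
        refine Finset.sum_congr rfl fun m hm => ?_
        simp only [Finset.mem_range] at hi hm
        rw [show i + m - i = m by omega, show n - (i + m) = n - i - m by omega]
    _ = conv b (conv a P) n := by
        simp only [conv, Finset.smul_sum]

/-- One forward difference of a convolution. -/
lemma fdiff_conv {X : Type*} [AddCommGroup X] [Module ℂ X]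
    (b : ℕ → ℂ) (g : ℕ → X) (n : ℕ) :
    fdiff (conv b g) n = conv b (fdiff g) n + b (n + 1) • g 0 := by
  have h1 : conv b g (n + 1)
      = (∑ i ∈ Finset.range (n + 1), b (n - i) • g (i + 1)) + b (n + 1) • g 0 := by
    rw [conv, Finset.sum_range_succ']
    congr 1
    refine Finset.sum_congr rfl fun i hi => ?_
    congr 2
    omega
  simp only [fdiff, conv, smul_sub, Finset.sum_sub_distrib] at h1 ⊢
  rw [h1]
  abel

/-- Three forward differences of a convolution. -/
lemma fdiff3_conv {X : Type*} [AddCommGroup X] [Module ℂ X]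
    (b : ℕ → ℂ) (g : ℕ → X) (n : ℕ) :
    fdiff (fdiff (fdiff (conv b g))) n
      = conv b (fdiff (fdiff (fdiff g))) n + b (n + 3) • g 0
        + b (n + 2) • (g 1 - g 0 - g 0 - g 0)
        + b (n + 1) • (g 2 - g 1 - g 1 - g 1 + g 0 + g 0 + g 0) := by
  have e1 : fdiff (conv b g) = fun m => conv b (fdiff g) m + b (m + 1) • g 0 :=
    funext (fdiff_conv b g)
  have key : ∀ (h : ℕ → X) (m : ℕ), conv b h (m + 1)
      = conv b (fdiff h) m + b (m + 1) • h 0 + conv b h m := by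
    intro h m
    have := fdiff_conv b h m
    simp only [fdiff] at this
    rw [← this]
    abel
  have e2 : fdiff (fdiff (conv b g))
      = fun m => conv b (fdiff (fdiff g)) m + b (m + 1) • fdiff g 0
          + (b (m + 2) • g 0 - b (m + 1) • g 0) := by
    funext m
    rw [e1]
    show (conv b (fdiff g) (m + 1) + b (m + 1 + 1) • g 0)
        - (conv b (fdiff g) m + b (m + 1) • g 0) = _
    rw [key (fdiff g) m]
    abel
  rw [show fdiff (fdiff (fdiff (conv b g))) n
      = fdiff (fdiff (conv b g)) (n + 1) - fdiff (fdiff (conv b g)) n from rfl, e2]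
  show (conv b (fdiff (fdiff g)) (n + 1) + b (n + 1 + 1) • fdiff g 0
      + (b (n + 1 + 2) • g 0 - b (n + 1 + 1) • g 0))
    - (conv b (fdiff (fdiff g)) n + b (n + 1) • fdiff g 0
      + (b (n + 2) • g 0 - b (n + 1) • g 0)) = _
  rw [key (fdiff (fdiff g)) n]
  have hd1 : fdiff g 0 = g 1 - g 0 := rfl
  have hd2 : fdiff (fdiff g) 0 = g 2 - g 1 - (g 1 - g 0) := rfl
  rw [hd1, hd2]
  simp only [show n + 1 + 1 = n + 2 from rfl, show n + 1 + 2 = n + 3 from rfl,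
    smul_sub, smul_add]
  abel

/-- Lemma 3.4: for `2 < α < 3`, a scalar sequence `b : ℕ → ℂ` and `P : ℕ → X`,
`Δ^α(b*P)(n) = (b*Δ^α P)(n) + b(n+3)P(0) + b(n+2)[P(1) − αP(0)]
 + b(n+1)[P(2) − αP(1) + (α(α−1)/2)P(0)]` for every `n ∈ ℕ`. -/
theorem fracDiff_conv {X : Type*} [NormedAddCommGroup X] [NormedSpace ℂ X]
    (α : ℝ) (hα1 : 2 < α) (hα2 : α < 3) (b : ℕ → ℂ) (P : ℕ → X) (n : ℕ) :
    fracDiff α (conv b P) n =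
      conv b (fracDiff α P) n + b (n + 3) • P 0
        + b (n + 2) • (P 1 - α • P 0)
        + b (n + 1) • (P 2 - α • P 1 + (α * (α - 1) / 2) • P 0) := by
  have hβpos : (0 : ℝ) < 3 - α := by linarith
  have hΓ : Real.Gamma (3 - α) ≠ 0 := (Real.Gamma_pos_of_pos hβpos).ne'
  have hβ0 : (3 : ℝ) - α ≠ 0 := hβpos.ne'
  have hk0 : kker (3 - α) 0 = 1 := by
    simp [kker, Real.Gamma_one, hΓ]
  have hk1 : kker (3 - α) 1 = 3 - α := by
    have h1 : ((1 : ℕ) : ℝ) = 1 := by norm_num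
    rw [kker, h1, Real.Gamma_add_one hβ0, show (1 : ℝ) + 1 = 2 by norm_num,
      Real.Gamma_two]
    field_simp
  have hk2 : kker (3 - α) 2 = (3 - α) * (4 - α) / 2 := by
    have h2 : ((2 : ℕ) : ℝ) = 2 := by norm_num
    have e1 : (3 : ℝ) - α + 2 = (3 - α + 1) + 1 := by ring
    have e2 : (2 : ℝ) + 1 = 2 + 1 := rfl
    rw [kker, h2, e1, Real.Gamma_add_one (by linarith), Real.Gamma_add_one hβ0,
      show (2 : ℝ) + 1 = (2 : ℝ) + 1 from rfl]
    have hΓ3 : Real.Gamma (2 + 1) = 2 := by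
      rw [Real.Gamma_add_one (by norm_num), Real.Gamma_two]; norm_num
    rw [hΓ3]
    field_simp
    ring
  set g : ℕ → X := conv (kker (3 - α)) P with hg
  have hg0 : g 0 = P 0 := by
    simp [hg, conv, hk0]
  have hg1 : g 1 = (3 - α) • P 0 + P 1 := by
    simp [hg, conv, Finset.sum_range_succ, hk0, hk1]
  have hg2 : g 2 = ((3 - α) * (4 - α) / 2) • P 0 + (3 - α) • P 1 + P 2 := by
    simp [hg, conv, Finset.sum_range_succ, hk0, hk1, hk2]
    try abel
  have hswap : conv (kker (3 - α)) (conv b P) = conv b g :=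
    funext fun m => conv_swap (kker (3 - α)) b P m
  have hfd : fdiff (fdiff (fdiff g)) = fracDiff α P := rfl
  show fdiff (fdiff (fdiff (conv (kker (3 - α)) (conv b P)))) n = _
  have h2 : ((3 - α) • P 0 + P 1) - P 0 - P 0 - P 0 = P 1 - α • P 0 := by module
  have h3 : (((3 - α) * (4 - α) / 2) • P 0 + (3 - α) • P 1 + P 2)
      - ((3 - α) • P 0 + P 1) - ((3 - α) • P 0 + P 1) - ((3 - α) • P 0 + P 1)
      + P 0 + P 0 + P 0
      = P 2 - α • P 1 + (α * (α - 1) / 2) • P 0 := by module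
  rw [hswap, fdiff3_conv, hfd, hg0, hg1, hg2, h2, h3]
end

section
/- Let X be a complex Banach space, A a bounded linear operator on X, 2 < α < 3 real, γ ∈ ℝ, λ a positive integer, and let (S_α(n))_{n ≥ −λ} be the α-resolvent sequence generated by A, α, γ, λ. Then Δ^α S_α(n) = A∘S_α(n) + γ·S_α(n−λ) for each n ∈ {0, 1, 2}, where Δ^α is applied to the B(X)-valued sequence (S_α(n))_{n∈ℕ}. -/
/-- `S` is the `α`-resolvent sequence generated by `A, α, γ, lam` (Definition 3.1):
`S(−i) = 0` for `i = 1,…,lam`; `S(0) = S(1) = S(2) = I`; and for all `n ∈ ℕ`,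
`S(n+3) − 2S(n+2) + S(n+1) = A∘(k^{α−2}*S)(n) + γ·(k^{α−2}*S^λ)(n)
 + k^{α−2}(n+3)I + (1−α)k^{α−2}(n+2)I + ((α−1)(α−2)/2)k^{α−2}(n+1)I`,
where `S^λ(n) = S(n−lam)`. -/
def IsResolvent {X : Type*} [NormedAddCommGroup X] [NormedSpace ℂ X]
    (A : X →L[ℂ] X) (α : ℝ) (γ : ℝ) (lam : ℕ) (S : ℤ → X →L[ℂ] X) : Prop :=
  (∀ i : ℕ, 1 ≤ i → i ≤ lam → S (-(i : ℤ)) = 0) ∧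
  S 0 = 1 ∧ S 1 = 1 ∧ S 2 = 1 ∧
  ∀ n : ℕ, S ((n : ℤ) + 3) - 2 • S ((n : ℤ) + 2) + S ((n : ℤ) + 1) =
    A.comp (conv (kker (α - 2)) (fun m : ℕ => S (m : ℤ)) n)
    + γ • conv (kker (α - 2)) (fun m : ℕ => S ((m : ℤ) - (lam : ℤ))) n
    + kker (α - 2) (n + 3) • (1 : X →L[ℂ] X)
    + ((1 - α) * kker (α - 2) (n + 2)) • (1 : X →L[ℂ] X)
    + ((α - 1) * (α - 2) / 2 * kker (α - 2) (n + 1)) • (1 : X →L[ℂ] X)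


lemma kker_zero (β : ℝ) (hβ : 0 < β) : kker β 0 = 1 := by
  have h : Real.Gamma β ≠ 0 := Real.Gamma_ne_zero (by
    intro m
    have : (0:ℝ) ≤ m := Nat.cast_nonneg m
    linarith)
  simp [kker, Real.Gamma_one, div_self h]

lemma kker_succ (β : ℝ) (hβ : 0 < β) (j : ℕ) :
    kker β (j + 1) = (β + j) / (j + 1) * kker β j := by
  have h1 : (β + ((j:ℝ) + 1) : ℝ) = (β + j) + 1 := by ring
  rw [kker, kker]
  push_cast
  rw [h1, Real.Gamma_add_one (by positivity), Real.Gamma_add_one (by positivity)]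
  field_simp

lemma kker_one (β : ℝ) (hβ : 0 < β) : kker β 1 = β := by
  have h := kker_succ β hβ 0
  rw [kker_zero β hβ] at h
  norm_num at h
  exact h

lemma kker_two (β : ℝ) (hβ : 0 < β) : kker β 2 = β * (β + 1) / 2 := by
  have h := kker_succ β hβ 1
  rw [kker_one β hβ] at h
  norm_num at h
  rw [h]; ring

lemma kker_three (β : ℝ) (hβ : 0 < β) : kker β 3 = β * (β + 1) * (β + 2) / 6 := by
  have h := kker_succ β hβ 2
  rw [kker_two β hβ] at h
  norm_num at h
  rw [h]; ring

lemma kker_four (β : ℝ) (hβ : 0 < β) : kker β 4 = β * (β + 1) * (β + 2) * (β + 3) / 24 := by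
  have h := kker_succ β hβ 3
  rw [kker_three β hβ] at h
  norm_num at h
  rw [h]; ring

lemma kker_five (β : ℝ) (hβ : 0 < β) :
    kker β 5 = β * (β + 1) * (β + 2) * (β + 3) * (β + 4) / 120 := by
  have h := kker_succ β hβ 4
  rw [kker_four β hβ] at h
  norm_num at h
  rw [h]; ring

lemma comp_smul_real {X : Type*} [NormedAddCommGroup X] [NormedSpace ℂ X]
    (A : X →L[ℂ] X) (r : ℝ) (T : X →L[ℂ] X) : A.comp (r • T) = r • A.comp T := by
  ext x; simp

lemma comp_one' {X : Type*} [NormedAddCommGroup X] [NormedSpace ℂ X]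
    (A : X →L[ℂ] X) : A.comp (1 : X →L[ℂ] X) = A := by
  ext x; simp

/-- Lemma 3.5: if `S` is the `α`-resolvent sequence generated by `A, α, γ, lam`,
then `Δ^α S(n) = A∘S(n) + γ·S(n−lam)` for each `n ∈ {0, 1, 2}`. -/
theorem fracDiff_resolvent_initial {X : Type*} [NormedAddCommGroup X] [NormedSpace ℂ X]
    (A : X →L[ℂ] X) (α : ℝ) (hα1 : 2 < α) (hα2 : α < 3) (γ : ℝ)
    (lam : ℕ) (hlam : 0 < lam) (S : ℤ → X →L[ℂ] X)
    (hS : IsResolvent A α γ lam S) :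
    ∀ n : ℕ, n ≤ 2 →
      fracDiff α (fun m : ℕ => S (m : ℤ)) n = A.comp (S (n : ℤ)) + γ • S ((n : ℤ) - (lam : ℤ)) := by
  obtain ⟨hneg, h0, h1, h2, hrec⟩ := hS
  have hβa : (0:ℝ) < 3 - α := by linarith
  have hβb : (0:ℝ) < α - 2 := by linarith
  have hS0 : S (-(lam:ℤ)) = 0 := hneg lam hlam le_rfl
  have r0 := hrec 0
  have r1 := hrec 1
  have r2 := hrec 2
  simp only [conv, Finset.sum_range_succ, Finset.sum_range_zero, zero_add] at r0 r1 r2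
  push_cast at r0 r1 r2
  norm_num at r0 r1 r2
  rw [h0, h1, h2] at r0 r1 r2
  simp only [zero_sub, hS0, smul_zero, add_zero, zero_add, smul_zero] at r0 r1 r2
  have e3 : S 3 = (S 3 - 2 * 1 + 1) + 1 := by noncomm_ring
  rw [r0] at e3
  have e4 : S 4 = (S 4 - 2 * S 3 + 1) + 2 * S 3 - 1 := by noncomm_ring
  rw [r1] at e4
  have e5 : S 5 = (S 5 - 2 * S 4 + S 3) + 2 * S 4 - S 3 := by noncomm_ring
  rw [r2] at e5
  intro n hn
  interval_cases n <;>
  · simp only [fracDiff, fdiff, conv, Finset.sum_range_succ, Finset.sum_range_zero, zero_add]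
    push_cast
    norm_num
    rw [h0, h1, h2]
    simp only [e5, e4, e3]
    simp only [zero_sub, hS0, smul_zero, add_zero, zero_add, comp_one',
      ContinuousLinearMap.comp_add, ContinuousLinearMap.comp_sub, comp_smul_real,
      kker_zero _ hβa, kker_one _ hβa, kker_two _ hβa, kker_three _ hβa, kker_four _ hβa,
      kker_five _ hβa, kker_zero _ hβb, kker_one _ hβb, kker_two _ hβb, kker_three _ hβb,
      kker_four _ hβb, kker_five _ hβb, two_mul]
    match_scalars <;> ring
end

section
/- Let X be a complex Banach space, A a bounded linear operator on X, 2 < α < 3 real, γ ∈ ℝ, λ a positive integer, (S_α(n))_{n ≥ −λ} the α-resolvent sequence generated by A, α, γ, λ, h_α the scalar sequence of Definition 3.7, and f : ℕ → X any sequence. Then for every n ∈ ℕ, Δ^α(h_α * S_α * f)(n) = A(h_α * S_α * f)(n) + γ(h_α * S_α^λ * f)(n) + f(n+3), where S_α^λ(n) = S_α(n−λ). -/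
/-- Finite convolution of an operator-valued sequence with a vector-valued
sequence: `(T*f)(n) = Σ_{j=0}^n T(n−j) (f j)`. -/
noncomputable def convOp {X : Type*} [NormedAddCommGroup X] [NormedSpace ℂ X]
    (T : ℕ → X →L[ℂ] X) (f : ℕ → X) (n : ℕ) : X :=
  ∑ j ∈ Finset.range (n + 1), (T (n - j)) (f j)

/-- The scalar sequence `h_α` of Definition 3.7: `h_α(0) = 1`, `h_α(1) = α−1`,
`h_α(2) = α(α−1)/2`, and
`h_α(n+3) + (1−α)h_α(n+2) + ((α−1)(α−2)/2)h_α(n+1) = 0` for `n ∈ ℕ`. -/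
noncomputable def hseq (α : ℝ) : ℕ → ℝ
  | 0 => 1
  | 1 => α - 1
  | 2 => α * (α - 1) / 2
  | n + 3 => (α - 1) * hseq α (n + 2) - ((α - 1) * (α - 2) / 2) * hseq α (n + 1)
set_option linter.unusedSectionVars false

namespace FracAux

open Finset

section ModuleLemmas

variable {M : Type*} [AddCommGroup M] [Module ℝ M]

lemma sum_triangle (F : ℕ → ℕ → M) (n : ℕ) :
    ∑ m ∈ range (n + 1), ∑ j ∈ range (m + 1), F m j
      = ∑ j ∈ range (n + 1), ∑ i ∈ range (n - j + 1), F (j + i) j := by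
  rw [Finset.sum_comm' (s' := fun j => Finset.Icc j n) (t' := range (n + 1))
    (fun m j => by simp only [Finset.mem_range, Finset.mem_Icc]; omega)]
  refine Finset.sum_congr rfl fun j hj => ?_
  refine Finset.sum_nbij' (fun m => m - j) (fun i => j + i) ?_ ?_ ?_ ?_ ?_
  · intro m hm; simp only [mem_Icc] at hm; simp only [mem_range]; omega
  · intro i hi; simp only [mem_range] at hi; simp only [mem_Icc]
    have := mem_range.mp hj; omega
  · intro m hm; simp only [mem_Icc] at hm; show j + (m - j) = m; omega
  · intro i _; show j + i - j = i; omega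
  · intro m hm; simp only [mem_Icc] at hm; rw [Nat.add_sub_cancel' hm.1]

lemma conv_congr {a b : ℕ → ℝ} {g g' : ℕ → M} (ha : ∀ i, a i = b i)
    (hg : ∀ j, g j = g' j) (n : ℕ) : conv a g n = conv b g' n :=
  Finset.sum_congr rfl fun j _ => by rw [ha, hg]

lemma conv_add_right (a : ℕ → ℝ) (g g' : ℕ → M) (n : ℕ) :
    conv a (fun j => g j + g' j) n = conv a g n + conv a g' n := by
  simp [conv, smul_add, Finset.sum_add_distrib]

lemma conv_sub_right (a : ℕ → ℝ) (g g' : ℕ → M) (n : ℕ) :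
    conv a (fun j => g j - g' j) n = conv a g n - conv a g' n := by
  simp [conv, smul_sub, Finset.sum_sub_distrib]

lemma conv_smul_right (a : ℕ → ℝ) (c : ℝ) (g : ℕ → M) (n : ℕ) :
    conv a (fun j => c • g j) n = c • conv a g n := by
  simp [conv, Finset.smul_sum, smul_smul, mul_comm]

lemma conv_smul_const (a b : ℕ → ℝ) (x : M) (n : ℕ) :
    conv a (fun j => b j • x) n = conv a b n • x := by
  simp [conv, Finset.sum_smul, smul_smul, smul_eq_mul]

lemma conv_one_left (g : ℕ → M) (n : ℕ) :
    conv (fun _ => (1 : ℝ)) g n = ∑ j ∈ range (n + 1), g j := by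
  simp [conv]

lemma conv_comm (a b : ℕ → ℝ) (n : ℕ) : conv a b n = conv b a n := by
  unfold conv
  rw [← Finset.sum_range_reflect]
  refine Finset.sum_congr rfl fun j hj => ?_
  have hj' := mem_range.mp hj
  have h1 : n + 1 - 1 - j = n - j := by omega
  have h2 : n - (n - j) = j := by omega
  rw [h1, h2, smul_eq_mul, smul_eq_mul, mul_comm]

lemma conv_conv (a b : ℕ → ℝ) (g : ℕ → M) (n : ℕ) :
    conv (fun m => conv a b m) g n = conv a (fun m => conv b g m) n := by
  unfold conv
  simp only [Finset.smul_sum, Finset.sum_smul, smul_smul, smul_eq_mul]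
  rw [sum_triangle (F := fun m j => (a (n - m) * b (m - j)) • g j)]
  refine Finset.sum_congr rfl fun j hj => Finset.sum_congr rfl fun i hi => ?_
  have : n - (j + i) = n - j - i := by omega
  rw [this, Nat.add_sub_cancel_left]

lemma conv_succ_right (a : ℕ → ℝ) (g : ℕ → M) (n : ℕ) :
    conv a g (n + 1) = conv a (fun j => g (j + 1)) n + a (n + 1) • g 0 := by
  unfold conv
  rw [Finset.sum_range_succ']
  congr 1
  refine Finset.sum_congr rfl fun j hj => ?_
  congr 2
  omega

lemma conv_succ_left (a : ℕ → ℝ) (g : ℕ → M) (n : ℕ) :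
    conv a g (n + 1) = conv (fun j => a (j + 1)) g n + a 0 • g (n + 1) := by
  unfold conv
  rw [Finset.sum_range_succ]
  congr 1
  · refine Finset.sum_congr rfl fun j hj => ?_
    have := mem_range.mp hj
    congr 2
    omega
  · congr 2
    omega

lemma fdiff_conv_left (a : ℕ → ℝ) (g : ℕ → M) (n : ℕ) :
    fdiff (conv a g) n = conv (fun j => a (j + 1) - a j) g n + a 0 • g (n + 1) := by
  show conv a g (n + 1) - conv a g n = _
  rw [conv_succ_left]
  have : conv (fun j => a (j + 1)) g n - conv a g n
      = conv (fun j => a (j + 1) - a j) g n := by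
    unfold conv
    rw [← Finset.sum_sub_distrib]
    exact Finset.sum_congr rfl fun j _ => by rw [sub_smul]
  rw [add_sub_right_comm, this]

lemma fdiff_conv_right (a : ℕ → ℝ) (g : ℕ → M) (n : ℕ) :
    fdiff (conv a g) n = conv a (fun j => fdiff g j) n + a (n + 1) • g 0 := by
  show conv a g (n + 1) - conv a g n = _
  rw [conv_succ_right]
  have : conv a (fun j => g (j + 1)) n - conv a g n
      = conv a (fun j => fdiff g j) n := by
    unfold conv
    rw [← Finset.sum_sub_distrib]
    refine Finset.sum_congr rfl fun j _ => by rw [← smul_sub]; rfl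
  rw [add_sub_right_comm, this]

/-- The Dirac sequence. -/
noncomputable def dirac : ℕ → ℝ := fun n => if n = 0 then 1 else 0

lemma conv_dirac (g : ℕ → M) (n : ℕ) : conv dirac g n = g n := by
  unfold conv dirac
  rw [Finset.sum_eq_single_of_mem n (by simp)]
  · simp
  · intro j hj hne
    have := mem_range.mp hj
    have : n - j ≠ 0 := by omega
    simp [this]

end ModuleLemmas

end FracAux
namespace FracAux

open Finset

section Kker

lemma kker_zero {β : ℝ} (hβ : 0 < β) : kker β 0 = 1 := by
  unfold kker
  rw [Nat.cast_zero, add_zero, zero_add, Real.Gamma_one, mul_one,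
    div_self (Real.Gamma_pos_of_pos hβ).ne']

lemma kker_succ_mul {β : ℝ} (hβ : 0 < β) (n : ℕ) :
    ((n : ℝ) + 1) * kker β (n + 1) = (β + n) * kker β n := by
  unfold kker
  have h1 : (β + ((n : ℕ) + 1 : ℕ) : ℝ) = (β + n) + 1 := by push_cast; ring
  have h2 : ((((n : ℕ) + 1 : ℕ) : ℝ) + 1) = ((n : ℝ) + 1) + 1 := by push_cast; ring
  rw [h1, h2, Real.Gamma_add_one (by positivity), Real.Gamma_add_one (by positivity)]
  have hΓβ : Real.Gamma β ≠ 0 := (Real.Gamma_pos_of_pos hβ).ne'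
  have hΓn : Real.Gamma ((n : ℝ) + 1) ≠ 0 := (Real.Gamma_pos_of_pos (by positivity)).ne'
  field_simp

lemma kker_succ {β : ℝ} (hβ : 0 < β) (n : ℕ) :
    kker β (n + 1) = (β + n) / ((n : ℝ) + 1) * kker β n := by
  have h := kker_succ_mul hβ n
  have hn : ((n : ℝ) + 1) ≠ 0 := by positivity
  field_simp
  linarith [h]

lemma kker_one_val {β : ℝ} (hβ : 0 < β) : kker β 1 = β := by
  have := kker_succ hβ 0
  simp [kker_zero hβ] at this
  simpa using this

lemma kker_two_val {β : ℝ} (hβ : 0 < β) : kker β 2 = β * (β + 1) / 2 := by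
  have := kker_succ hβ 1
  rw [kker_one_val hβ] at this
  norm_num at this
  rw [show (2 : ℕ) = 1 + 1 from rfl, this]
  ring

lemma kker_one_seq (n : ℕ) : kker 1 n = 1 := by
  induction n with
  | zero => exact kker_zero one_pos
  | succ m ih =>
      rw [kker_succ one_pos, ih]
      have : ((m : ℝ) + 1) ≠ 0 := by positivity
      field_simp
      ring

lemma vandermonde {a b : ℝ} (ha : 0 < a) (hb : 0 < b) :
    ∀ n : ℕ, conv (kker a) (kker b) n = kker (a + b) n := by
  intro n
  induction n with
  | zero => simp [conv, kker_zero ha, kker_zero hb, kker_zero (by positivity : (0:ℝ) < a + b)]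
  | succ n ih =>
    have key : ((n : ℝ) + 1) * conv (kker a) (kker b) (n + 1)
        = (a + b + n) * conv (kker a) (kker b) n := by
      unfold conv
      simp only [smul_eq_mul, Finset.mul_sum]
      have split : ∀ j ∈ range (n + 2),
          ((n : ℝ) + 1) * (kker a (n + 1 - j) * kker b j)
            = ((n + 1 - j : ℕ) : ℝ) * kker a (n + 1 - j) * kker b j
              + (j : ℝ) * (kker a (n + 1 - j) * kker b j) := by
        intro j hj
        have hj' := mem_range.mp hj
        have : ((n + 1 - j : ℕ) : ℝ) = (n : ℝ) + 1 - (j : ℝ) := by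
          push_cast [Nat.cast_sub (by omega : j ≤ n + 1)]; ring
        rw [this]; ring
      rw [Finset.sum_congr rfl split, Finset.sum_add_distrib]
      have S1 : ∑ j ∈ range (n + 2), ((n + 1 - j : ℕ) : ℝ) * kker a (n + 1 - j) * kker b j
          = ∑ j ∈ range (n + 1), (a + ((n - j : ℕ) : ℝ)) * kker a (n - j) * kker b j := by
        rw [Finset.sum_range_succ]
        simp only [Nat.sub_self, Nat.cast_zero, zero_mul]
        rw [add_zero]
        refine Finset.sum_congr rfl fun j hj => ?_
        have hj' := mem_range.mp hj
        have h3 : n + 1 - j = (n - j) + 1 := by omega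
        rw [h3]
        have htmp := kker_succ_mul ha (n - j)
        push_cast
        linear_combination kker b j * htmp
      have S2 : ∑ j ∈ range (n + 2), (j : ℝ) * (kker a (n + 1 - j) * kker b j)
          = ∑ j ∈ range (n + 1), (b + ((j : ℕ) : ℝ)) * kker a (n - j) * kker b j := by
        rw [Finset.sum_range_succ']
        simp only [Nat.cast_zero, zero_mul, add_zero]
        refine Finset.sum_congr rfl fun j hj => ?_
        have hj' := mem_range.mp hj
        have h3 : n + 1 - (j + 1) = n - j := by omega
        rw [h3]
        have htmp := kker_succ_mul hb j
        push_cast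
        linear_combination kker a (n - j) * htmp
      rw [S1, S2, ← Finset.sum_add_distrib]
      refine Finset.sum_congr rfl fun j hj => ?_
      have hj' := mem_range.mp hj
      have : ((n - j : ℕ) : ℝ) = (n : ℝ) - (j : ℝ) := by
        rw [Nat.cast_sub (by omega : j ≤ n)]
      rw [this]
      ring
    rw [ih] at key
    have hab := kker_succ_mul (by positivity : (0:ℝ) < a + b) n
    have hn : ((n : ℝ) + 1) ≠ 0 := by positivity
    have : ((n : ℝ) + 1) * conv (kker a) (kker b) (n + 1)
        = ((n : ℝ) + 1) * kker (a + b) (n + 1) := by rw [key, hab]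
    exact mul_left_cancel₀ hn this

end Kker

end FracAux
namespace FracAux

open Finset

section OpLemmas

variable {X : Type*} [NormedAddCommGroup X] [NormedSpace ℂ X]

lemma convOp_congr {T U : ℕ → X →L[ℂ] X} (h : ∀ m, T m = U m) (f : ℕ → X) (n : ℕ) :
    convOp T f n = convOp U f n :=
  Finset.sum_congr rfl fun j _ => by rw [h]

lemma convOp_add (T U : ℕ → X →L[ℂ] X) (f : ℕ → X) (n : ℕ) :
    convOp (fun m => T m + U m) f n = convOp T f n + convOp U f n := by
  simp [convOp, Finset.sum_add_distrib]

lemma convOp_sub (T U : ℕ → X →L[ℂ] X) (f : ℕ → X) (n : ℕ) :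
    convOp (fun m => T m - U m) f n = convOp T f n - convOp U f n := by
  simp [convOp, Finset.sum_sub_distrib]

lemma convOp_smul (c : ℝ) (T : ℕ → X →L[ℂ] X) (f : ℕ → X) (n : ℕ) :
    convOp (fun m => c • T m) f n = c • convOp T f n := by
  simp [convOp, Finset.smul_sum]

lemma convOp_succ (T : ℕ → X →L[ℂ] X) (f : ℕ → X) (n : ℕ) :
    convOp T f (n + 1) = convOp (fun m => T (m + 1)) f n + T 0 (f (n + 1)) := by
  unfold convOp
  rw [Finset.sum_range_succ]
  congr 1
  · refine Finset.sum_congr rfl fun j hj => ?_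
    have := mem_range.mp hj
    congr 2
    omega
  · congr 2
    omega

lemma conv_convOp (a : ℕ → ℝ) (T : ℕ → X →L[ℂ] X) (f : ℕ → X) (n : ℕ) :
    conv a (fun m => convOp T f m) n = convOp (fun m => conv a T m) f n := by
  unfold conv convOp
  simp only [Finset.smul_sum, ContinuousLinearMap.sum_apply, ContinuousLinearMap.smul_apply]
  rw [sum_triangle (F := fun m j => a (n - m) • (T (m - j)) (f j))]
  refine Finset.sum_congr rfl fun j hj => Finset.sum_congr rfl fun i hi => ?_
  have h1 : n - (j + i) = n - j - i := by omega
  rw [h1, Nat.add_sub_cancel_left]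

lemma map_convOp (A : X →L[ℂ] X) (T : ℕ → X →L[ℂ] X) (f : ℕ → X) (n : ℕ) :
    A (convOp T f n) = convOp (fun m => A.comp (T m)) f n := by
  simp [convOp, map_sum]

lemma comp_conv (A : X →L[ℂ] X) (a : ℕ → ℝ) (T : ℕ → X →L[ℂ] X) (n : ℕ) :
    A.comp (conv a T n) = conv a (fun m => A.comp (T m)) n := by
  ext x
  simp [conv, ContinuousLinearMap.sum_apply, ContinuousLinearMap.smul_apply,
    map_sum, ContinuousLinearMap.map_smul_of_tower]

end OpLemmas

section Hseq

variable (α : ℝ)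

/-- The polynomial sequence `p` with `h * p = δ`. -/
noncomputable def pseq : ℕ → ℝ := fun n =>
  if n = 0 then 1 else if n = 1 then 1 - α else if n = 2 then (α - 1) * (α - 2) / 2 else 0

lemma pseq_eq_zero {i : ℕ} (hi : 3 ≤ i) : pseq α i = 0 := by
  unfold pseq
  have h0 : i ≠ 0 := by omega
  have h1 : i ≠ 1 := by omega
  have h2 : i ≠ 2 := by omega
  simp [h0, h1, h2]

lemma conv_hp (n : ℕ) : conv (hseq α) (pseq α) n = dirac n := by
  match n with
  | 0 => simp [conv, hseq, pseq, dirac]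
  | 1 =>
      simp [conv, Finset.sum_range_succ, hseq, pseq, dirac]
      try ring
  | 2 =>
      simp [conv, Finset.sum_range_succ, hseq, pseq, dirac]
      try ring
  | (m + 3) =>
      unfold conv
      rw [← Finset.sum_subset (Finset.range_subset_range.mpr (by omega : 3 ≤ m + 3 + 1))
        (fun j hj hj' => by
          rw [pseq_eq_zero α (by simpa using hj' : _), smul_zero])]
      · simp only [Finset.sum_range_succ, Finset.sum_range_zero, smul_eq_mul]
        have h3 : (m + 3 : ℕ) - 0 = m + 3 := rfl
        have h4 : (m + 3 : ℕ) - 1 = m + 2 := rfl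
        have h5 : (m + 3 : ℕ) - 2 = m + 1 := rfl
        rw [h3, h4, h5]
        have hrec : hseq α (m + 3)
            = (α - 1) * hseq α (m + 2) - ((α - 1) * (α - 2) / 2) * hseq α (m + 1) := by
          simp [hseq]
        simp only [pseq, dirac]
        norm_num
        rw [hrec]
        ring

lemma conv_ph (n : ℕ) : conv (pseq α) (hseq α) n = dirac n := by
  rw [conv_comm]; exact conv_hp α n

variable {M : Type*} [AddCommGroup M] [Module ℝ M]

lemma conv_hp_cancel (u : ℕ → M) (n : ℕ) :
    conv (hseq α) (fun m => conv (pseq α) u m) n = u n := by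
  rw [← conv_conv, conv_congr (fun i => conv_hp α i) (fun j => rfl), conv_dirac]

lemma conv_ph_cancel (u : ℕ → M) (n : ℕ) :
    conv (pseq α) (fun m => conv (hseq α) u m) n = u n := by
  rw [← conv_conv, conv_congr (fun i => conv_ph α i) (fun j => rfl), conv_dirac]

end Hseq

end FracAux
namespace FracAux

open Finset

section Expand

variable {M : Type*} [AddCommGroup M] [Module ℝ M]

lemma conv_kernel_comb (K : ℕ → ℝ) (g : ℕ → M) (n : ℕ) :
    conv (fun m => K (m+3) - 3*K (m+2) + 3*K (m+1) - K m) g n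
      = conv (fun m => K (m+3)) g n - (3:ℝ) • conv (fun m => K (m+2)) g n
        + (3:ℝ) • conv (fun m => K (m+1)) g n - conv K g n := by
  unfold conv
  simp only [sub_smul, add_smul, mul_smul, Finset.smul_sum,
    Finset.sum_sub_distrib, Finset.sum_add_distrib]

lemma conv_shift_one (a : ℕ → ℝ) (g : ℕ → M) (n : ℕ) :
    conv a g (n + 1) = conv (fun j => a (j+1)) g n + a 0 • g (n+1) :=
  conv_succ_left a g n

lemma conv_shift_two (a : ℕ → ℝ) (g : ℕ → M) (n : ℕ) :
    conv a g (n + 2) = conv (fun j => a (j+2)) g n + a 1 • g (n+1) + a 0 • g (n+2) := by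
  have h1 := conv_succ_left a g (n+1)
  have h2 := conv_succ_left (fun j => a (j+1)) g n
  rw [show n + 2 = n + 1 + 1 from rfl, h1, h2]

lemma conv_shift_three (a : ℕ → ℝ) (g : ℕ → M) (n : ℕ) :
    conv a g (n + 3) = conv (fun j => a (j+3)) g n + a 2 • g (n+1) + a 1 • g (n+2)
      + a 0 • g (n+3) := by
  have h1 := conv_succ_left a g (n+2)
  have h2 := conv_shift_two (fun j => a (j+1)) g n
  rw [show n + 3 = n + 2 + 1 from rfl, h1, h2]

lemma fdiff3_eq (u : ℕ → M) (n : ℕ) :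
    fdiff (fdiff (fdiff u)) n = u (n+3) - (3:ℝ) • u (n+2) + (3:ℝ) • u (n+1) - u n := by
  unfold fdiff
  have e3 : n+1+1+1 = n+3 := rfl
  have e2 : n+1+1 = n+2 := rfl
  rw [e3, e2]
  module

lemma fracDiff_expand {α : ℝ} (hα1 : 2 < α) (hα2 : α < 3) (g : ℕ → M) (n : ℕ) :
    fracDiff α g n =
      conv (fun m => kker (3-α) (m+3) - 3*kker (3-α) (m+2) + 3*kker (3-α) (m+1)
        - kker (3-α) m) g n
      + (α*(α-1)/2) • g (n+1) - α • g (n+2) + g (n+3) := by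
  have h3α : (0:ℝ) < 3 - α := by linarith
  have hK0 : kker (3-α) 0 = 1 := kker_zero h3α
  have hK1 : kker (3-α) 1 = 3-α := kker_one_val h3α
  have hK2 : kker (3-α) 2 = (3-α)*(4-α)/2 := by
    rw [kker_two_val h3α]; ring
  have hmain : fracDiff α g n
      = conv (kker (3-α)) g (n+3) - (3:ℝ) • conv (kker (3-α)) g (n+2)
        + (3:ℝ) • conv (kker (3-α)) g (n+1) - conv (kker (3-α)) g n :=
    fdiff3_eq (conv (kker (3-α)) g) n
  rw [hmain, conv_kernel_comb, conv_shift_three, conv_shift_two, conv_shift_one,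
    hK0, hK1, hK2]
  module

end Expand

end FracAux
namespace FracAux

open Finset

section Qlemmas

variable (α : ℝ)

/-- The inhomogeneity `q`. -/
noncomputable def qval : ℕ → ℝ := fun n =>
  kker (α - 2) (n + 3) + (1 - α) * kker (α - 2) (n + 2)
    + (α - 1) * (α - 2) / 2 * kker (α - 2) (n + 1)

lemma conv_p_one (m : ℕ) :
    conv (pseq α) (fun _ => (1:ℝ)) (m + 2) = (α - 2) * (α - 3) / 2 := by
  rw [conv_comm, conv_one_left]
  rw [← Finset.sum_subset (Finset.range_subset_range.mpr (by omega : 3 ≤ m + 2 + 1))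
    (fun j _ hj' => pseq_eq_zero α (by simpa using hj'))]
  simp [Finset.sum_range_succ, pseq]
  ring

variable {α}

lemma conv_pk (hα1 : 2 < α) (hα2 : α < 3) (n : ℕ) :
    conv (pseq α) (kker (α - 2)) (n + 3) = qval α n := by
  have hα2' : (0:ℝ) < α - 2 := by linarith
  unfold conv
  rw [← Finset.sum_subset
    (s₁ := (Finset.range (n + 4)).filter (fun j => n + 1 ≤ j))
    (Finset.filter_subset _ _)
    (fun j hj hj' => by
      simp only [Finset.mem_filter, Finset.mem_range, not_and, not_le] at hj hj'
      have : 3 ≤ n + 3 - j := by omega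
      rw [pseq_eq_zero α this, zero_smul])]
  have : (Finset.range (n + 4)).filter (fun j => n + 1 ≤ j) = {n+1, n+2, n+3} := by
    ext j
    simp only [Finset.mem_filter, Finset.mem_range, Finset.mem_insert, Finset.mem_singleton]
    omega
  rw [this]
  rw [Finset.sum_insert (by simp), Finset.sum_insert (by simp),
    Finset.sum_singleton]
  have e1 : n + 3 - (n+1) = 2 := by omega
  have e2 : n + 3 - (n+2) = 1 := by omega
  have e3 : n + 3 - (n+3) = 0 := by omega
  rw [e1, e2, e3]
  simp only [pseq, smul_eq_mul, qval]
  norm_num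
  ring

lemma w_zero (hα1 : 2 < α) : conv (pseq α) (kker (α - 2)) 0 = 1 := by
  have hα2' : (0:ℝ) < α - 2 := by linarith
  simp [conv, pseq, kker_zero hα2']

lemma w_one (hα1 : 2 < α) : conv (pseq α) (kker (α - 2)) 1 = -1 := by
  have hα2' : (0:ℝ) < α - 2 := by linarith
  simp [conv, Finset.sum_range_succ, pseq, kker_zero hα2', kker_one_val hα2']
  ring

lemma w_two (hα1 : 2 < α) : conv (pseq α) (kker (α - 2)) 2 = 0 := by
  have hα2' : (0:ℝ) < α - 2 := by linarith
  simp [conv, Finset.sum_range_succ, pseq, kker_zero hα2', kker_one_val hα2',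
    kker_two_val hα2']
  ring

lemma conv_Kw (hα1 : 2 < α) (hα2 : α < 3) (m : ℕ) :
    conv (kker (3 - α)) (fun j => conv (pseq α) (kker (α - 2)) j) m
      = conv (pseq α) (fun _ => (1:ℝ)) m := by
  rw [← conv_conv]
  rw [conv_congr (b := fun i => conv (pseq α) (kker (3 - α)) i)
    (fun i => conv_comm _ _ i) (fun j => rfl)]
  rw [conv_conv]
  refine conv_congr (fun i => rfl) (fun j => ?_) m
  have h3α : (0:ℝ) < 3 - α := by linarith
  have hα2' : (0:ℝ) < α - 2 := by linarith
  rw [vandermonde h3α hα2' j, show (3 - α) + (α - 2) = (1:ℝ) by ring, kker_one_seq]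

lemma conv_Kq (hα1 : 2 < α) (hα2 : α < 3) (n : ℕ) :
    conv (kker (3 - α)) (qval α) n
      = (α - 2) * (α - 3) / 2 - (kker (3 - α) (n + 3) - kker (3 - α) (n + 2)) := by
  set w := fun j => conv (pseq α) (kker (α - 2)) j with hw
  have step1 : conv (kker (3 - α)) (qval α) n
      = conv (kker (3 - α)) (fun j => w (j + 3)) n :=
    conv_congr (fun i => rfl) (fun j => (conv_pk hα1 hα2 j).symm) n
  have s1 := conv_succ_right (kker (3 - α)) w (n + 2)
  have s2 := conv_succ_right (kker (3 - α)) (fun j => w (j + 1)) (n + 1)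
  have s3 := conv_succ_right (kker (3 - α)) (fun j => w (j + 2)) n
  have e1 : conv (kker (3-α)) (fun j => w (j+1+1)) (n+1)
      = conv (kker (3-α)) (fun j => w (j+2)) (n+1) := conv_congr (fun i => rfl) (fun j => rfl) _
  have e2 : conv (kker (3-α)) (fun j => w (j+2+1)) n
      = conv (kker (3-α)) (fun j => w (j+3)) n := conv_congr (fun i => rfl) (fun j => rfl) _
  have hKw : conv (kker (3 - α)) w (n + 3) = (α - 2) * (α - 3) / 2 := by
    rw [conv_Kw hα1 hα2, show n + 3 = (n + 1) + 2 from rfl, conv_p_one]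
  rw [show n + 2 + 1 = n + 3 from rfl] at s1
  rw [show n + 1 + 1 = n + 2 from rfl] at s2
  rw [e1] at s2
  rw [e2] at s3
  rw [hKw] at s1
  have hw0 : w 0 = 1 := w_zero hα1
  have hw1 : w (0 + 1) = -1 := w_one hα1
  have hw2 : w (0 + 2) = 0 := w_two hα1
  rw [hw0] at s1
  rw [hw1] at s2
  rw [hw2] at s3
  rw [step1]
  rw [s2, s3] at s1
  simp only [smul_eq_mul] at s1 ⊢
  linarith [s1]

end Qlemmas

end FracAux
namespace FracAux

open Finset

section Crux

variable {X : Type*} [NormedAddCommGroup X] [NormedSpace ℂ X]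
variable {A : X →L[ℂ] X} {α : ℝ} {γ : ℝ} {lam : ℕ} {S : ℤ → X →L[ℂ] X}

lemma crux1 (hα1 : 2 < α) (hα2 : α < 3) (hS : IsResolvent A α γ lam S) (n : ℕ) :
    fracDiff α (fun m : ℕ => S (m : ℤ)) n
      = A.comp (S (n : ℤ)) + γ • S ((n : ℤ) - (lam : ℤ)) := by
  obtain ⟨-, hS0, hS1, hS2, hrec⟩ := hS
  set St : ℕ → X →L[ℂ] X := fun m => S (m : ℤ) with hSt
  set Sl : ℕ → X →L[ℂ] X := fun m => S ((m : ℤ) - (lam : ℤ)) with hSl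
  set Tt : ℕ → X →L[ℂ] X := fun m => A.comp (St m) + γ • Sl m with hTt
  have hSt0 : St 0 = 1 := by simpa [hSt] using hS0
  have hSt1 : St 1 = 1 := by simpa [hSt] using hS1
  have hSt2 : St 2 = 1 := by simpa [hSt] using hS2
  set K := kker (3 - α) with hK
  set k := kker (α - 2) with hk
  -- cleaned-up resolvent equation
  have hres : ∀ m : ℕ, St (m+3) - St (m+2) - (St (m+2) - St (m+1))
      = conv k Tt m + qval α m • 1 := by
    intro m
    have h := hrec m
    have c3 : ((m : ℤ) + 3) = ((m + 3 : ℕ) : ℤ) := by push_cast; ring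
    have c2 : ((m : ℤ) + 2) = ((m + 2 : ℕ) : ℤ) := by push_cast; ring
    have c1 : ((m : ℤ) + 1) = ((m + 1 : ℕ) : ℤ) := by push_cast; ring
    rw [c3, c2, c1] at h
    have hL : S ((m + 3 : ℕ) : ℤ) - 2 • S ((m + 2 : ℕ) : ℤ) + S ((m + 1 : ℕ) : ℤ)
        = St (m+3) - St (m+2) - (St (m+2) - St (m+1)) := by
      simp only [hSt]
      abel
    rw [hL] at h
    rw [h]
    have hA : A.comp (conv k St m) = conv k (fun j => A.comp (St j)) m := comp_conv A k St m
    have hG : γ • conv k Sl m = conv k (fun j => γ • Sl j) m := (conv_smul_right k γ Sl m).symm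
    rw [hA, hG, ← conv_add_right]
    have hq : k (m + 3) • (1 : X →L[ℂ] X) + ((1 - α) * k (m + 2)) • (1 : X →L[ℂ] X)
        + ((α - 1) * (α - 2) / 2 * k (m + 1)) • (1 : X →L[ℂ] X)
        = qval α m • (1 : X →L[ℂ] X) := by
      rw [qval]
      module
    rw [add_assoc, add_assoc, ← add_assoc (k (m+3) • (1 : X →L[ℂ] X)), hq]
  set u : ℕ → X →L[ℂ] X := fun m => St (m+2) - St (m+1) - (St (m+1) - St m) with hu
  have hu0 : u 0 = 0 := by
    simp [hu, hSt0, hSt1, hSt2]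
  have hu_succ : ∀ m, u (m+1) = conv k Tt m + qval α m • 1 := fun m => hres m
  have h3α : (0:ℝ) < 3 - α := by linarith
  have hα2' : (0:ℝ) < α - 2 := by linarith
  -- expansion of the triple difference
  have f1 : ∀ m, fdiff (conv K St) m = conv K (fun j => fdiff St j) m + K (m+1) • 1 := by
    intro m
    rw [fdiff_conv_right, hSt0]
  have f2 : ∀ m, fdiff (fdiff (conv K St)) m = conv K u m + (K (m+2) - K (m+1)) • 1 := by
    intro m
    have : fdiff (fdiff (conv K St)) m
        = fdiff (conv K St) (m+1) - fdiff (conv K St) m := rfl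
    rw [this, f1, f1]
    have hd : conv K (fun j => fdiff St j) (m+1) - conv K (fun j => fdiff St j) m
        = fdiff (conv K (fun j => fdiff St j)) m := rfl
    have hd2 : fdiff (conv K (fun j => fdiff St j)) m
        = conv K (fun j => fdiff (fun i => fdiff St i) j) m + K (m+1) • (fdiff St 0) := by
      rw [fdiff_conv_right]
    have hfd0 : fdiff St 0 = 0 := by
      show St 1 - St 0 = 0
      rw [hSt0, hSt1, sub_self]
    have hcu : conv K (fun j => fdiff (fun i => fdiff St i) j) m = conv K u m := by
      refine conv_congr (fun i => rfl) (fun j => ?_) m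
      show fdiff St (j+1) - fdiff St j = u j
      show (St (j+2) - St (j+1)) - (St (j+1) - St j) = _
      rw [hu]
    rw [hcu, hfd0, smul_zero, add_zero] at hd2
    rw [← hd2, ← hd]
    module
  have f3 : ∀ m, fracDiff α St m
      = (conv K u (m+1) - conv K u m) + (K (m+3) - 2*K (m+2) + K (m+1)) • 1 := by
    intro m
    have : fracDiff α St m
        = fdiff (fdiff (conv K St)) (m+1) - fdiff (fdiff (conv K St)) m := rfl
    rw [this, f2, f2]
    have e : m + 1 + 1 = m + 2 := rfl
    have e' : m + 1 + 2 = m + 3 := rfl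
    rw [e, e']
    module
  have hKu0 : conv K u 0 = 0 := by
    simp [conv, hu0]
  have hKu : ∀ m, conv K u (m+1)
      = (∑ j ∈ range (m+1), Tt j)
        + ((α - 2) * (α - 3) / 2 - (K (m+3) - K (m+2))) • 1 := by
    intro m
    rw [conv_succ_right, hu0, smul_zero, add_zero]
    rw [conv_congr (fun i => rfl) (fun j => hu_succ j) m]
    rw [conv_add_right]
    have h1 : conv K (fun j => conv k Tt j) m = conv (fun _ => (1:ℝ)) Tt m := by
      rw [← conv_conv]
      refine conv_congr (fun i => ?_) (fun j => rfl) m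
      rw [hK, hk, vandermonde h3α hα2' i, show (3 - α) + (α - 2) = (1:ℝ) by ring,
        kker_one_seq]
    have h2 : conv K (fun j => qval α j • (1 : X →L[ℂ] X)) m
        = ((α - 2) * (α - 3) / 2 - (K (m+3) - K (m+2))) • 1 := by
      rw [conv_smul_const, hK, conv_Kq hα1 hα2]
    rw [h1, h2, conv_one_left]
  show fracDiff α St n = Tt n
  match n with
  | 0 =>
    rw [f3 0, hKu 0, hKu0]
    have hK1 : K 1 = 3 - α := kker_one_val h3α
    have hK2 : K 2 = (3 - α) * (4 - α) / 2 := by rw [hK, kker_two_val h3α]; ring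
    rw [show (0:ℕ)+1 = 1 from rfl, show (0:ℕ)+2 = 2 from rfl, show (0:ℕ)+3 = 3 from rfl]
    rw [Finset.sum_range_one, hK1, hK2]
    have : ((α - 2) * (α - 3) / 2 - (K 3 - (3 - α) * (4 - α) / 2))
        + (K 3 - 2 * ((3 - α) * (4 - α) / 2) + (3 - α)) = 0 := by ring
    rw [sub_zero, add_assoc, ← add_smul, this, zero_smul, add_zero]
  | (m + 1) =>
    rw [f3 (m+1), hKu (m+1), hKu m]
    rw [Finset.sum_range_succ]
    have e1 : m + 1 + 1 = m + 2 := rfl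
    have e2 : m + 1 + 2 = m + 3 := rfl
    have e3 : m + 1 + 3 = m + 4 := rfl
    rw [e1, e2, e3]
    have hsc : ((α - 2) * (α - 3) / 2 - (K (m+4) - K (m+3)))
        - ((α - 2) * (α - 3) / 2 - (K (m+3) - K (m+2)))
        + (K (m+4) - 2*K (m+3) + K (m+2)) = 0 := by ring
    calc (∑ j ∈ range (m+1), Tt j) + Tt (m+1)
          + ((α - 2) * (α - 3) / 2 - (K (m+4) - K (m+3))) • (1 : X →L[ℂ] X)
          - ((∑ j ∈ range (m+1), Tt j)
            + ((α - 2) * (α - 3) / 2 - (K (m+3) - K (m+2))) • (1 : X →L[ℂ] X))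
          + (K (m+4) - 2*K (m+3) + K (m+2)) • (1 : X →L[ℂ] X)
        = Tt (m+1) + (((α - 2) * (α - 3) / 2 - (K (m+4) - K (m+3)))
            - ((α - 2) * (α - 3) / 2 - (K (m+3) - K (m+2)))
            + (K (m+4) - 2*K (m+3) + K (m+2))) • (1 : X →L[ℂ] X) := by
          module
      _ = Tt (m+1) := by rw [hsc, zero_smul, add_zero]

end Crux

end FracAux
namespace FracAux

open Finset

section Crux2

variable {X : Type*} [NormedAddCommGroup X] [NormedSpace ℂ X]
variable {A : X →L[ℂ] X} {α : ℝ} {γ : ℝ} {lam : ℕ} {S : ℤ → X →L[ℂ] X}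

lemma Vval0 (hS : IsResolvent A α γ lam S) :
    conv (hseq α) (fun l : ℕ => S (l : ℤ)) 0 = 1 := by
  have h0 : S ((0:ℕ) : ℤ) = 1 := by rw [Nat.cast_zero]; exact hS.2.1
  rw [conv, Finset.sum_range_one, Nat.sub_zero, h0]
  show hseq α 0 • (1 : X →L[ℂ] X) = 1
  rw [show hseq α 0 = 1 from rfl, one_smul]

lemma Vval1 (hS : IsResolvent A α γ lam S) :
    conv (hseq α) (fun l : ℕ => S (l : ℤ)) 1 = α • 1 := by
  have h0 : S ((0:ℕ) : ℤ) = 1 := by rw [Nat.cast_zero]; exact hS.2.1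
  have h1 : S ((1:ℕ) : ℤ) = 1 := by rw [Nat.cast_one]; exact hS.2.2.1
  rw [conv, Finset.sum_range_succ, Finset.sum_range_one]
  simp only [Nat.sub_zero, Nat.sub_self]
  rw [h0, h1]
  rw [show hseq α 0 = 1 from rfl, show hseq α 1 = α - 1 from rfl]
  module

lemma Vval2 (hS : IsResolvent A α γ lam S) :
    conv (hseq α) (fun l : ℕ => S (l : ℤ)) 2 = (α * (α + 1) / 2) • 1 := by
  have h0 : S ((0:ℕ) : ℤ) = 1 := by rw [Nat.cast_zero]; exact hS.2.1
  have h1 : S ((1:ℕ) : ℤ) = 1 := by rw [Nat.cast_one]; exact hS.2.2.1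
  have h2 : S ((2:ℕ) : ℤ) = 1 := by rw [Nat.cast_two]; exact hS.2.2.2.1
  rw [conv, Finset.sum_range_succ, Finset.sum_range_succ, Finset.sum_range_one]
  simp only [Nat.sub_zero, Nat.sub_self]
  rw [show (2:ℕ) - 1 = 1 from rfl, h0, h1, h2]
  rw [show hseq α 0 = 1 from rfl, show hseq α 1 = α - 1 from rfl,
    show hseq α 2 = α * (α - 1) / 2 from rfl]
  module

lemma crux2 (hα1 : 2 < α) (hα2 : α < 3) (hS : IsResolvent A α γ lam S) (m : ℕ) :
    conv (fun j => kker (3 - α) (j + 3) - 3 * kker (3 - α) (j + 2)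
        + 3 * kker (3 - α) (j + 1) - kker (3 - α) j)
        (fun i => conv (hseq α) (fun l : ℕ => S (l : ℤ)) i) m
      + ((α * (α - 1) / 2) • conv (hseq α) (fun l : ℕ => S (l : ℤ)) (m + 1)
        + ((-α) • conv (hseq α) (fun l : ℕ => S (l : ℤ)) (m + 2)
          + conv (hseq α) (fun l : ℕ => S (l : ℤ)) (m + 3)))
      = conv (hseq α) (fun j => A.comp (S (j : ℤ)) + γ • S ((j : ℤ) - (lam : ℤ))) m := by
  set St : ℕ → X →L[ℂ] X := fun l => S (l : ℤ) with hSt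
  set Tt : ℕ → X →L[ℂ] X :=
    fun j => A.comp (S (j : ℤ)) + γ • S ((j : ℤ) - (lam : ℤ)) with hTt
  set d3K : ℕ → ℝ := fun j => kker (3 - α) (j + 3) - 3 * kker (3 - α) (j + 2)
        + 3 * kker (3 - α) (j + 1) - kker (3 - α) j with hd3K
  set V : ℕ → X →L[ℂ] X := fun i => conv (hseq α) St i with hV
  set W : ℕ → X →L[ℂ] X := fun j => conv d3K V j
      + ((α * (α - 1) / 2) • V (j + 1) + ((-α) • V (j + 2) + V (j + 3))) with hW
  have hV0 : V 0 = 1 := Vval0 hS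
  have hV1 : V (0 + 1) = α • 1 := Vval1 hS
  have hV2 : V (0 + 2) = (α * (α + 1) / 2) • 1 := Vval2 hS
  -- p * V = St
  have hpV : ∀ i, conv (pseq α) V i = St i := fun i => conv_ph_cancel α St i
  -- shifted versions
  have c2 : ∀ i, conv (pseq α) (fun j => V (j + 1)) i
      = St (i + 1) - pseq α (i + 1) • 1 := by
    intro i
    have h := conv_succ_right (pseq α) V i
    rw [hpV, hV0] at h
    rw [eq_sub_iff_add_eq, ← h]
  have c3 : ∀ i, conv (pseq α) (fun j => V (j + 2)) i
      = St (i + 2) - pseq α (i + 2) • 1 - pseq α (i + 1) • (α • 1) := by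
    intro i
    have h := conv_succ_right (pseq α) (fun j => V (j + 1)) i
    rw [c2 (i + 1), hV1] at h
    have hb : conv (pseq α) (fun j => V (j + 1 + 1)) i
        = conv (pseq α) (fun j => V (j + 2)) i := conv_congr (fun t => rfl) (fun t => rfl) i
    rw [hb] at h
    rw [eq_sub_iff_add_eq, eq_sub_iff_add_eq, ← h, show i + 1 + 1 = i + 2 from rfl]
    abel
  have c4 : ∀ i, conv (pseq α) (fun j => V (j + 3)) i
      = St (i + 3) - pseq α (i + 2) • (α • 1)
        - pseq α (i + 1) • ((α * (α + 1) / 2) • 1) := by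
    intro i
    have h := conv_succ_right (pseq α) (fun j => V (j + 2)) i
    rw [c3 (i + 1), hV2] at h
    have hb : conv (pseq α) (fun j => V (j + 2 + 1)) i
        = conv (pseq α) (fun j => V (j + 3)) i := conv_congr (fun t => rfl) (fun t => rfl) i
    rw [hb] at h
    have hp3 : pseq α (i + 1 + 2) = 0 := pseq_eq_zero α (by omega)
    rw [hp3, zero_smul] at h
    rw [eq_sub_iff_add_eq, eq_sub_iff_add_eq, ← h,
      show i + 1 + 1 = i + 2 from rfl, show i + 1 + 2 = i + 3 from rfl]
    abel
  -- p * (d3K * V) = d3K * St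
  have c1 : ∀ i, conv (pseq α) (fun j => conv d3K V j) i = conv d3K St i := by
    intro i
    rw [← conv_conv]
    rw [conv_congr (b := fun t => conv d3K (pseq α) t) (fun t => conv_comm _ _ t)
      (fun t => rfl) i]
    rw [conv_conv]
    exact conv_congr (fun t => rfl) (fun t => hpV t) i
  -- the key pointwise identity : p * W = Tt
  have hPW : ∀ i, conv (pseq α) W i = Tt i := by
    intro i
    have expand : conv (pseq α) W i
        = conv (pseq α) (fun j => conv d3K V j) i
          + ((α * (α - 1) / 2) • conv (pseq α) (fun j => V (j + 1)) i
            + ((-α) • conv (pseq α) (fun j => V (j + 2)) i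
              + conv (pseq α) (fun j => V (j + 3)) i)) := by
      rw [hW]
      rw [conv_add_right (pseq α) (fun j => conv d3K V j)
        (fun j => (α * (α - 1) / 2) • V (j + 1) + ((-α) • V (j + 2) + V (j + 3))) i]
      rw [conv_add_right (pseq α) (fun j => (α * (α - 1) / 2) • V (j + 1))
        (fun j => (-α) • V (j + 2) + V (j + 3)) i]
      rw [conv_add_right (pseq α) (fun j => (-α) • V (j + 2)) (fun j => V (j + 3)) i]
      rw [conv_smul_right, conv_smul_right]
    rw [expand, c1, c2, c3, c4]
    have hfd : conv d3K St i + ((α * (α - 1) / 2) • St (i + 1)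
        + ((-α) • St (i + 2) + St (i + 3))) = fracDiff α St i := by
      rw [fracDiff_expand hα1 hα2 St i, hd3K]
      module
    have hcx : fracDiff α St i = Tt i := crux1 hα1 hα2 hS i
    rw [← hcx, ← hfd]
    module
  -- conclude
  show W m = conv (hseq α) Tt m
  rw [← conv_hp_cancel α W m]
  exact conv_congr (fun t => rfl) (fun t => hPW t) m

end Crux2

end FracAux
open FracAux


/-- Equation (3.16): if `S` is the `α`-resolvent sequence generated by
`A, α, γ, lam`, `h_α` is the scalar sequence of Definition 3.7 and `f : ℕ → X`,
then `Δ^α(h_α * S * f)(n) = A(h_α * S * f)(n) + γ(h_α * S^λ * f)(n) + f(n+3)`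
for every `n ∈ ℕ`, where `S^λ(n) = S(n−lam)`. -/
theorem fracDiff_hconv_resolvent_apply {X : Type*} [NormedAddCommGroup X] [NormedSpace ℂ X]
    (A : X →L[ℂ] X) (α : ℝ) (hα1 : 2 < α) (hα2 : α < 3) (γ : ℝ)
    (lam : ℕ) (hlam : 0 < lam) (S : ℤ → X →L[ℂ] X)
    (hS : IsResolvent A α γ lam S) (f : ℕ → X) :
    ∀ n : ℕ,
      fracDiff α (conv (hseq α) (convOp (fun m : ℕ => S (m : ℤ)) f)) n =
        A (conv (hseq α) (convOp (fun m : ℕ => S (m : ℤ)) f) n)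
          + γ • conv (hseq α) (convOp (fun m : ℕ => S ((m : ℤ) - (lam : ℤ))) f) n
          + f (n + 3) := by
  intro n
  set St : ℕ → X →L[ℂ] X := fun m => S (m : ℤ) with hSt
  set Sl : ℕ → X →L[ℂ] X := fun m => S ((m : ℤ) - (lam : ℤ)) with hSl
  set Tt : ℕ → X →L[ℂ] X := fun j => A.comp (St j) + γ • Sl j with hTt
  set V : ℕ → X →L[ℂ] X := fun i => conv (hseq α) St i with hV
  set d3K : ℕ → ℝ := fun j => kker (3 - α) (j + 3) - 3 * kker (3 - α) (j + 2)
      + 3 * kker (3 - α) (j + 1) - kker (3 - α) j with hd3K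
  have hV0 : V 0 = 1 := Vval0 hS
  have hV1 : V (0 + 1) = α • 1 := Vval1 hS
  have hV2 : V (0 + 2) = (α * (α + 1) / 2) • 1 := Vval2 hS
  -- the inner convolution as an operator convolution
  have hg : ∀ i, conv (hseq α) (convOp St f) i = convOp V f i := by
    intro i
    exact conv_convOp (hseq α) St f i
  -- expand the fractional difference
  rw [fracDiff_expand hα1 hα2 (conv (hseq α) (convOp St f)) n]
  have hgf : conv (hseq α) (convOp St f) = convOp V f := funext hg
  rw [hgf, ← hd3K]
  -- expand shifted operator convolutions
  have s1 : convOp V f (n+1) = convOp (fun m => V (m+1)) f n + V 0 (f (n+1)) :=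
    convOp_succ V f n
  have s2 : convOp V f (n+2) = convOp (fun m => V (m+2)) f n
      + V (0+1) (f (n+1)) + V 0 (f (n+2)) := by
    have t1 := convOp_succ V f (n+1)
    have t2 := convOp_succ (fun m => V (m+1)) f n
    rw [show n+2 = n+1+1 from rfl, t1, t2]
  have s3 : convOp V f (n+3) = convOp (fun m => V (m+3)) f n
      + V (0+2) (f (n+1)) + V (0+1) (f (n+2)) + V 0 (f (n+3)) := by
    have t1 := convOp_succ V f (n+2)
    have t2 := convOp_succ (fun m => V (m+1)) f (n+1)
    have t3 := convOp_succ (fun m => V (m+2)) f n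
    rw [show n+3 = n+2+1 from rfl, t1, t2, t3]
  have sc : conv d3K (convOp V f) n = convOp (fun i => conv d3K V i) f n :=
    conv_convOp d3K V f n
  rw [s1, s2, s3, sc]
  -- identify the main operator convolution with h * T using crux2
  have hWT : ∀ j, conv d3K V j
      + ((α * (α - 1) / 2) • V (j + 1) + ((-α) • V (j + 2) + V (j + 3)))
      = conv (hseq α) Tt j := fun j => crux2 hα1 hα2 hS j
  have hcombine : convOp (fun i => conv d3K V i) f n
      + ((α * (α - 1) / 2) • convOp (fun m => V (m+1)) f n
        + ((-α) • convOp (fun m => V (m+2)) f n + convOp (fun m => V (m+3)) f n))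
      = convOp (fun j => conv (hseq α) Tt j) f n := by
    rw [← convOp_smul (α * (α - 1) / 2) (fun m => V (m+1)) f n,
      ← convOp_smul (-α) (fun m => V (m+2)) f n,
      ← convOp_add (fun m => (-α) • V (m+2)) (fun m => V (m+3)) f n,
      ← convOp_add (fun m => (α * (α - 1) / 2) • V (m+1))
        (fun m => (-α) • V (m+2) + V (m+3)) f n,
      ← convOp_add (fun i => conv d3K V i)
        (fun m => (α * (α - 1) / 2) • V (m+1) + ((-α) • V (m+2) + V (m+3))) f n]
    exact convOp_congr (fun j => hWT j) f n
  -- right-hand side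
  have hrhs : A (convOp V f n) + γ • conv (hseq α) (convOp Sl f) n
      = convOp (fun j => conv (hseq α) Tt j) f n := by
    rw [map_convOp A V f n]
    rw [show conv (hseq α) (convOp Sl f) n = convOp (fun m => conv (hseq α) Sl m) f n
      from conv_convOp (hseq α) Sl f n]
    rw [← convOp_smul γ (fun m => conv (hseq α) Sl m) f n,
      ← convOp_add (fun m => A.comp (V m)) (fun m => γ • conv (hseq α) Sl m) f n]
    refine convOp_congr (fun j => ?_) f n
    rw [hTt]
    rw [conv_add_right (hseq α) (fun t => A.comp (St t)) (fun t => γ • Sl t) j]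
    rw [← comp_conv A (hseq α) St j, conv_smul_right (hseq α) γ Sl j]
  rw [hrhs, ← hcombine]
  -- final bookkeeping
  rw [hV0, hV1, hV2]
  have horw : ∀ x : X, (1 : X →L[ℂ] X) x = x := fun x => rfl
  have hα' : ∀ x : X, (α • (1 : X →L[ℂ] X)) x = α • x := fun x => rfl
  have hα'' : ∀ x : X, ((α * (α + 1) / 2) • (1 : X →L[ℂ] X)) x = (α * (α + 1) / 2) • x :=
    fun x => rfl
  rw [horw, horw, horw, hα', hα', hα'']
  module
end
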